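/- arXiv:2409.10461 — 10 statements merged into one kernel-verified Lean document; each statement's English description precedes it below -/
import Mathlib

section
/- Let G be a group acting transitively on a set Ω, let α ∈ Ω, and let H and K be subgroups of G containing the stabiliser of α. Let r_H be the G-invariant equivalence relation on Ω defined by r_H x y iff there exist g ∈ G and h ∈ H with x = g • α and y = (g*h) • α, and define r_K similarly. Then r_H and r_K commute (r_H ∘ r_K = r_K ∘ r_H as relations) if and only if H K = K H as subsets of G (i.e., the setwise products {hk : h ∈ H, k ∈ K} and {kh : k ∈ K, h ∈ H} coincide). -/
open scoped Pointwise
/-- The `G`-invariant equivalence relation on `Ω` corresponding to a subgroup `H`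
containing the stabiliser of `α`. -/
def subgroupRel {G Ω : Type*} [Group G] [MulAction G Ω] (α : Ω) (H : Subgroup G) :
    Ω → Ω → Prop :=
  fun x y => ∃ g : G, ∃ h ∈ H, x = g • α ∧ y = (g * h) • α

lemma subgroupRel_iff_aux {G Ω : Type*} [Group G] [MulAction G Ω] (α : Ω) (H : Subgroup G)
    (hH : MulAction.stabilizer G α ≤ H) (g g' : G) :
    subgroupRel α H (g • α) (g' • α) ↔ g⁻¹ * g' ∈ H := by
  constructor
  · rintro ⟨g₀, h, hh, h1, h2⟩
    have e1 : g₀⁻¹ * g ∈ H := hH (by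
      rw [MulAction.mem_stabilizer_iff, mul_smul, h1, ← mul_smul]; simp)
    have e2 : (g₀ * h)⁻¹ * g' ∈ H := hH (by
      rw [MulAction.mem_stabilizer_iff, mul_smul, h2, ← mul_smul, inv_mul_cancel, one_smul])
    have : g⁻¹ * g' = (g₀⁻¹ * g)⁻¹ * h * ((g₀ * h)⁻¹ * g') := by group
    rw [this]
    exact H.mul_mem (H.mul_mem (H.inv_mem e1) hh) e2
  · intro hmem
    exact ⟨g, g⁻¹ * g', hmem, rfl, by rw [mul_inv_cancel_left]⟩

/-- For subgroups `H`, `K` containing the stabiliser of `α`, the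
corresponding invariant equivalence relations commute iff `HK = KH`. -/
theorem subgroupRel_commute_iff {G Ω : Type*} [Group G] [MulAction G Ω]
    [MulAction.IsPretransitive G Ω] (α : Ω) (H K : Subgroup G)
    (hH : MulAction.stabilizer G α ≤ H) (hK : MulAction.stabilizer G α ≤ K) :
    (∀ x z : Ω,
      (∃ y, subgroupRel α H x y ∧ subgroupRel α K y z) ↔
      (∃ y, subgroupRel α K x y ∧ subgroupRel α H y z)) ↔
    (H : Set G) * (K : Set G) = (K : Set G) * (H : Set G) := by
  have key : ∀ (a c : G),
      (∃ y, subgroupRel α H (a • α) y ∧ subgroupRel α K y (c • α)) ↔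
      a⁻¹ * c ∈ (H : Set G) * (K : Set G) := by
    intro a c
    constructor
    · rintro ⟨y, hy1, hy2⟩
      obtain ⟨b, rfl⟩ := MulAction.exists_smul_eq G α y
      rw [subgroupRel_iff_aux α H hH] at hy1
      rw [subgroupRel_iff_aux α K hK] at hy2
      exact ⟨a⁻¹ * b, hy1, b⁻¹ * c, hy2, by group⟩
    · rintro ⟨h, hh, k, hk, hhk⟩
      refine ⟨(a * h) • α, ?_, ?_⟩
      · rw [subgroupRel_iff_aux α H hH]; simpa using hh
      · rw [subgroupRel_iff_aux α K hK]
        have e : a⁻¹ * c = h * k := hhk.symm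
        have : (a * h)⁻¹ * c = k := by
          rw [mul_inv_rev, mul_assoc, e, inv_mul_cancel_left]
        rw [this]; exact hk
  have key' : ∀ (a c : G),
      (∃ y, subgroupRel α K (a • α) y ∧ subgroupRel α H y (c • α)) ↔
      a⁻¹ * c ∈ (K : Set G) * (H : Set G) := by
    intro a c
    constructor
    · rintro ⟨y, hy1, hy2⟩
      obtain ⟨b, rfl⟩ := MulAction.exists_smul_eq G α y
      rw [subgroupRel_iff_aux α K hK] at hy1
      rw [subgroupRel_iff_aux α H hH] at hy2
      exact ⟨a⁻¹ * b, hy1, b⁻¹ * c, hy2, by group⟩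
    · rintro ⟨k, hk, h, hh, hhk⟩
      refine ⟨(a * k) • α, ?_, ?_⟩
      · rw [subgroupRel_iff_aux α K hK]; simpa using hk
      · rw [subgroupRel_iff_aux α H hH]
        have e : a⁻¹ * c = k * h := hhk.symm
        have : (a * k)⁻¹ * c = h := by
          rw [mul_inv_rev, mul_assoc, e, inv_mul_cancel_left]
        rw [this]; exact hh
  constructor
  · intro hcomm
    ext g
    have := hcomm ((1 : G) • α) (g • α)
    rw [key 1 g, key' 1 g] at this
    simpa using this
  · intro hset x z
    obtain ⟨a, rfl⟩ := MulAction.exists_smul_eq G α x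
    obtain ⟨c, rfl⟩ := MulAction.exists_smul_eq G α z
    rw [key a c, key' a c, hset]
end

section
/- Let G be a group acting transitively on a set Ω and let α ∈ Ω. Then every two G-invariant equivalence relations on Ω commute (i.e., G has the OB property) if and only if for all subgroups H, K of G containing the stabiliser of α, H K = K H as subsets of G. -/
open scoped Pointwise

/-- A relation on `Ω` is `G`-invariant if it is preserved by the action of every
element of `G`. -/
def MulInvariant (G : Type*) {Ω : Type*} [Group G] [MulAction G Ω]
    (r : Ω → Ω → Prop) : Prop :=
  ∀ (g : G) (x y : Ω), r x y ↔ r (g • x) (g • y)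

/-- A group `G` acting on `Ω` has the OB property if any two `G`-invariant
equivalence relations on `Ω` commute. -/
def HasOB (G Ω : Type*) [Group G] [MulAction G Ω] : Prop :=
  ∀ r s : Ω → Ω → Prop, Equivalence r → Equivalence s →
    MulInvariant G r → MulInvariant G s →
    ∀ x z : Ω, (∃ y, r x y ∧ s y z) ↔ (∃ y, s x y ∧ r y z)

section Aux

variable {G Ω : Type*} [Group G] [MulAction G Ω]

/-- The `G`-invariant relation associated to a subgroup. -/
def relOf (α : Ω) (H : Subgroup G) (x y : Ω) : Prop :=
  ∃ g h : G, h ∈ H ∧ g • α = x ∧ (g * h) • α = y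

lemma relOf_invariant (α : Ω) (H : Subgroup G) : MulInvariant G (relOf α H) := by
  intro a x y
  constructor
  · rintro ⟨g, h, hh, hx, hy⟩
    exact ⟨a * g, h, hh, by rw [mul_smul, hx], by rw [mul_assoc, mul_smul, hy]⟩
  · rintro ⟨g, h, hh, hx, hy⟩
    refine ⟨a⁻¹ * g, h, hh, ?_, ?_⟩
    · rw [mul_smul, hx, inv_smul_smul]
    · rw [mul_assoc, mul_smul, hy, inv_smul_smul]

lemma relOf_equivalence [MulAction.IsPretransitive G Ω] (α : Ω) (H : Subgroup G)
    (hH : MulAction.stabilizer G α ≤ H) : Equivalence (relOf α H) := by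
  constructor
  · intro x
    obtain ⟨g, hg⟩ := MulAction.exists_smul_eq G α x
    exact ⟨g, 1, H.one_mem, hg, by simpa using hg⟩
  · rintro x y ⟨g, h, hh, hx, hy⟩
    exact ⟨g * h, h⁻¹, H.inv_mem hh, hy, by simpa using hx⟩
  · rintro x y z ⟨g, h, hh, hx, hy⟩ ⟨g', h', hh', hx', hy'⟩
    have hs : (g * h)⁻¹ * g' ∈ MulAction.stabilizer G α := by
      rw [MulAction.mem_stabilizer_iff, mul_smul, hx', ← hy, inv_smul_smul]
    refine ⟨g, h * ((g * h)⁻¹ * g') * h', H.mul_mem (H.mul_mem hh (hH hs)) hh', hx, ?_⟩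
    have heq : g * (h * ((g * h)⁻¹ * g') * h') = g' * h' := by group
    rw [heq, hy']

lemma relOf_alpha (α : Ω) (H : Subgroup G) (hH : MulAction.stabilizer G α ≤ H) (g : G) :
    relOf α H α (g • α) ↔ g ∈ H := by
  constructor
  · rintro ⟨a, h, hh, ha, hg⟩
    have h1 : a ∈ MulAction.stabilizer G α := ha
    have h2 : (a * h)⁻¹ * g ∈ MulAction.stabilizer G α := by
      rw [MulAction.mem_stabilizer_iff, mul_smul, ← hg, inv_smul_smul]
    have heq : g = (a * h) * ((a * h)⁻¹ * g) := by group
    rw [heq]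
    exact H.mul_mem (H.mul_mem (hH h1) hh) (hH h2)
  · intro hg
    exact ⟨1, g, hg, one_smul _ _, by simp⟩

/-- The subgroup associated to a `G`-invariant equivalence relation. -/
def subOf (α : Ω) (r : Ω → Ω → Prop) (hr : Equivalence r) (hi : MulInvariant G r) :
    Subgroup G where
  carrier := {g | r α (g • α)}
  one_mem' := by simpa using hr.refl α
  mul_mem' := by
    intro a b ha hb
    have h2 : r (a • α) ((a * b) • α) := by
      rw [mul_smul]
      exact (hi a α (b • α)).mp hb
    exact hr.trans ha h2
  inv_mem' := by
    intro a ha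
    have h2 := (hi a⁻¹ α (a • α)).mp ha
    rw [inv_smul_smul] at h2
    exact hr.symm h2

lemma stabilizer_le_subOf (α : Ω) (r : Ω → Ω → Prop) (hr : Equivalence r)
    (hi : MulInvariant G r) : MulAction.stabilizer G α ≤ subOf α r hr hi := by
  intro g hg
  have : g • α = α := hg
  show r α (g • α)
  rw [this]
  exact hr.refl α

lemma rel_iff_mem_subOf (α : Ω) (r : Ω → Ω → Prop) (hr : Equivalence r)
    (hi : MulInvariant G r) (a b : G) :
    r (a • α) (b • α) ↔ a⁻¹ * b ∈ subOf α r hr hi := by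
  have := hi a⁻¹ (a • α) (b • α)
  rw [inv_smul_smul, ← mul_smul] at this
  exact this

lemma ob_half [MulAction.IsPretransitive G Ω] (α : Ω)
    (hc : ∀ H K : Subgroup G, MulAction.stabilizer G α ≤ H → MulAction.stabilizer G α ≤ K →
      (H : Set G) * (K : Set G) = (K : Set G) * (H : Set G))
    (r s : Ω → Ω → Prop) (hr : Equivalence r) (hs : Equivalence s)
    (hir : MulInvariant G r) (his : MulInvariant G s) (x z : Ω)
    (h : ∃ y, r x y ∧ s y z) : ∃ y, s x y ∧ r y z := by
  obtain ⟨y, hxy, hyz⟩ := h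
  obtain ⟨a, rfl⟩ := MulAction.exists_smul_eq G α x
  obtain ⟨b, rfl⟩ := MulAction.exists_smul_eq G α y
  obtain ⟨c, rfl⟩ := MulAction.exists_smul_eq G α z
  have hH : a⁻¹ * b ∈ subOf α r hr hir := (rel_iff_mem_subOf α r hr hir a b).mp hxy
  have hK : b⁻¹ * c ∈ subOf α s hs his := (rel_iff_mem_subOf α s hs his b c).mp hyz
  have hmem : a⁻¹ * c ∈ (subOf α r hr hir : Set G) * (subOf α s hs his : Set G) := by
    have : a⁻¹ * c = (a⁻¹ * b) * (b⁻¹ * c) := by group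
    rw [this]
    exact Set.mul_mem_mul hH hK
  rw [hc _ _ (stabilizer_le_subOf α r hr hir) (stabilizer_le_subOf α s hs his)] at hmem
  obtain ⟨k, hk, h', hh', hkh⟩ := hmem
  refine ⟨(a * k) • α, ?_, ?_⟩
  · rw [rel_iff_mem_subOf α s hs his]
    simpa using hk
  · rw [rel_iff_mem_subOf α r hr hir]
    have : (a * k)⁻¹ * c = k⁻¹ * (a⁻¹ * c) := by group
    rw [this, ← hkh]
    simpa using hh'

end Aux

/-- A transitive group `G` has the OB property iff any two subgroups
containing a point stabiliser commute. -/
theorem hasOB_iff_subgroups_commute {G Ω : Type*} [Group G] [MulAction G Ω]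
    [MulAction.IsPretransitive G Ω] (α : Ω) :
    HasOB G Ω ↔
      ∀ H K : Subgroup G, MulAction.stabilizer G α ≤ H → MulAction.stabilizer G α ≤ K →
        (H : Set G) * (K : Set G) = (K : Set G) * (H : Set G) := by
  constructor
  · intro hOB
    have key : ∀ H K : Subgroup G, MulAction.stabilizer G α ≤ H →
        MulAction.stabilizer G α ≤ K → (H : Set G) * (K : Set G) ⊆ (K : Set G) * (H : Set G) := by
      intro H K hH hK x hx
      obtain ⟨h, hh, k, hk, rfl⟩ := hx
      have h1 : ∃ y, relOf α H α y ∧ relOf α K y ((h * k) • α) := by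
        refine ⟨h • α, (relOf_alpha α H hH h).mpr hh, ?_⟩
        have := (relOf_invariant α K h α (k • α)).mp ((relOf_alpha α K hK k).mpr hk)
        rwa [← mul_smul] at this
      have h2 := (hOB (relOf α H) (relOf α K) (relOf_equivalence α H hH)
        (relOf_equivalence α K hK) (relOf_invariant α H) (relOf_invariant α K)
        α ((h * k) • α)).mp h1
      obtain ⟨y, hky, hhy⟩ := h2
      obtain ⟨c, rfl⟩ := MulAction.exists_smul_eq G α y
      have hcK : c ∈ K := (relOf_alpha α K hK c).mp hky
      have hcH : c⁻¹ * (h * k) ∈ H := by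
        have := (relOf_invariant α H c⁻¹ (c • α) ((h * k) • α)).mp hhy
        rw [inv_smul_smul, ← mul_smul] at this
        exact (relOf_alpha α H hH _).mp this
      have heq : h * k = c * (c⁻¹ * (h * k)) := by group
      show h * k ∈ (K : Set G) * (H : Set G)
      rw [heq]
      exact Set.mul_mem_mul hcK hcH
    intro H K hH hK
    exact Set.Subset.antisymm (key H K hH hK) (key K H hK hH)
  · intro hc r s hr hs hir his x z
    constructor
    · exact ob_half α hc r s hr hs hir his x z
    · exact ob_half α (fun H K hH hK => (hc K H hK hH).symm) s r hs hr his hir x z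
end

section
/- Let Γ and Δ be finite nonempty sets, let G be a transitive subgroup of the symmetric group on Γ and H a transitive subgroup of the symmetric group on Δ. Let W be the set of permutations σ of Γ × Δ for which there exist h ∈ H and a function f : Δ → G such that σ(γ,δ) = (f(δ)(γ), h(δ)) for all (γ,δ). Then W is a (transitive) subgroup of the symmetric group on Γ × Δ (the imprimitive wreath product G ≀ H), and W has the OB property if and only if both G and H have the OB property. -/
/-- A relation on `Ω` is invariant under a group `G` of permutations of `Ω`. -/
def PermInvariant {Ω : Type*} (G : Subgroup (Equiv.Perm Ω)) (r : Ω → Ω → Prop) : Prop :=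
  ∀ σ ∈ G, ∀ x y : Ω, r x y ↔ r (σ x) (σ y)

/-- A permutation group `G` on `Ω` has the OB property if any two `G`-invariant
equivalence relations on `Ω` commute. -/
def PermOB {Ω : Type*} (G : Subgroup (Equiv.Perm Ω)) : Prop :=
  ∀ r s : Ω → Ω → Prop, Equivalence r → Equivalence s →
    PermInvariant G r → PermInvariant G s →
    ∀ x z : Ω, (∃ y, r x y ∧ s y z) ↔ (∃ y, s x y ∧ r y z)

/-!
An invariant equivalence relation `r` of the wreath product `G ≀ H` on `Γ × Δ` is a product
`s × t` of a `G`-invariant equivalence `s` on `Γ` and an `H`-invariant equivalence `t` on `Δ`: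
if `r` relates points of two different blocks `Γ × {δ}` and `Γ × {δ'}`, moving one block by
`G` while fixing the other shows that `r` relates the two blocks entirely. Since relational
composition of products is computed componentwise, `G` and `H` having the OB property gives it
for `G ≀ H`. Conversely, `s × (=)` and `⊤ × t` are invariant under `G ≀ H`, so the OB property
descends from `G ≀ H` to `G` and to `H`.
-/

open Relation

section ProdRel

variable {α β : Type*}

def prodRel (s : α → α → Prop) (t : β → β → Prop) (p q : α × β) : Prop :=
  s p.1 q.1 ∧ t p.2 q.2

@[simp]
lemma prodRel_mk {s : α → α → Prop} {t : β → β → Prop} {a a' : α} {b b' : β} :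
    prodRel s t (a, b) (a', b') ↔ s a a' ∧ t b b' :=
  Iff.rfl

lemma Equivalence.prodRel {s : α → α → Prop} {t : β → β → Prop} (hs : Equivalence s)
    (ht : Equivalence t) : Equivalence (prodRel s t) :=
  ⟨fun _ => ⟨hs.refl _, ht.refl _⟩, fun h => ⟨hs.symm h.1, ht.symm h.2⟩,
    fun h h' => ⟨hs.trans h.1 h'.1, ht.trans h.2 h'.2⟩⟩

lemma comp_prodRel (s s' : α → α → Prop) (t t' : β → β → Prop) :
    Comp (prodRel s t) (prodRel s' t') = prodRel (Comp s s') (Comp t t') := by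
  ext ⟨a, b⟩ ⟨a'', b''⟩
  simp only [Comp, prodRel_mk, Prod.exists]
  exact ⟨fun ⟨a', b', h, h'⟩ => ⟨⟨a', h.1, h'.1⟩, b', h.2, h'.2⟩,
    fun ⟨⟨a', ha, ha'⟩, b', hb, hb'⟩ => ⟨a', b', ⟨ha, hb⟩, ha', hb'⟩⟩

end ProdRel

lemma equivalence_top (α : Sort*) : Equivalence fun _ _ : α => True :=
  ⟨fun _ => trivial, fun _ => trivial, fun _ _ => trivial⟩

lemma PermOB.comp_comm {Ω : Type*} {G : Subgroup (Equiv.Perm Ω)} (hG : PermOB G)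
    {r s : Ω → Ω → Prop} (er : Equivalence r) (es : Equivalence s)
    (hr : PermInvariant G r) (hs : PermInvariant G s) : Comp r s = Comp s r := by
  ext x z
  exact hG r s er es hr hs x z

section Wreath

variable {Γ Δ : Type*} {G : Subgroup (Equiv.Perm Γ)} {H : Subgroup (Equiv.Perm Δ)}

def wrPerm (f : Δ → Equiv.Perm Γ) (h : Equiv.Perm Δ) : Equiv.Perm (Γ × Δ) where
  toFun p := (f p.2 p.1, h p.2)
  invFun p := ((f (h.symm p.2)).symm p.1, h.symm p.2)
  left_inv p := by simp
  right_inv p := by simp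

@[simp]
lemma wrPerm_apply (f : Δ → Equiv.Perm Γ) (h : Equiv.Perm Δ) (γ : Γ) (δ : Δ) :
    wrPerm f h (γ, δ) = (f δ γ, h δ) :=
  rfl

variable (G H) in
def wreathSubgroup : Subgroup (Equiv.Perm (Γ × Δ)) where
  carrier := {σ : Equiv.Perm (Γ × Δ) | ∃ h ∈ H, ∃ f : Δ → Equiv.Perm Γ,
      (∀ δ : Δ, f δ ∈ G) ∧ ∀ (γ : Γ) (δ : Δ), σ (γ, δ) = (f δ γ, h δ)}
  one_mem' := ⟨1, one_mem H, fun _ => 1, fun _ => one_mem G, fun _ _ => rfl⟩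
  mul_mem' := by
    rintro a b ⟨h₁, hh₁, f₁, hf₁, he₁⟩ ⟨h₂, hh₂, f₂, hf₂, he₂⟩
    refine ⟨h₁ * h₂, mul_mem hh₁ hh₂, fun δ => f₁ (h₂ δ) * f₂ δ,
      fun δ => mul_mem (hf₁ _) (hf₂ _), fun γ δ => ?_⟩
    rw [Equiv.Perm.mul_apply, he₂, he₁]
    rfl
  inv_mem' := by
    rintro a ⟨h, hh, f, hf, he⟩
    refine ⟨h⁻¹, inv_mem hh, fun δ => (f (h⁻¹ δ))⁻¹, fun δ => inv_mem (hf _),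
      fun γ δ => a.injective ?_⟩
    rw [← Equiv.Perm.mul_apply, mul_inv_cancel, Equiv.Perm.one_apply, he]
    simp

lemma wrPerm_mem_wreathSubgroup {f : Δ → Equiv.Perm Γ} {h : Equiv.Perm Δ}
    (hf : ∀ δ, f δ ∈ G) (hh : h ∈ H) : wrPerm f h ∈ wreathSubgroup G H :=
  ⟨h, hh, f, hf, fun _ _ => rfl⟩

lemma wreathSubgroup_transitive (hG : ∀ γ γ' : Γ, ∃ g ∈ G, g γ = γ')
    (hH : ∀ δ δ' : Δ, ∃ h ∈ H, h δ = δ') (p q : Γ × Δ) :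
    ∃ σ ∈ wreathSubgroup G H, σ p = q := by
  obtain ⟨g, hg, hp⟩ := hG p.1 q.1
  obtain ⟨h, hh, hq⟩ := hH p.2 q.2
  exact ⟨wrPerm (fun _ => g) h, wrPerm_mem_wreathSubgroup (fun _ => hg) hh, Prod.ext hp hq⟩

lemma PermInvariant.prodRel_eq {s : Γ → Γ → Prop} (hs : PermInvariant G s) :
    PermInvariant (wreathSubgroup G H) (prodRel s Eq) := by
  rintro σ ⟨h, -, f, hf, hσ⟩ ⟨γ, δ⟩ ⟨γ', δ'⟩
  rw [hσ, hσ, prodRel_mk, prodRel_mk, h.injective.eq_iff]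
  refine and_congr_left fun hδ => ?_
  subst hδ
  exact hs _ (hf δ) γ γ'

lemma PermInvariant.prodRel_top {t : Δ → Δ → Prop} (ht : PermInvariant H t) :
    PermInvariant (wreathSubgroup G H) (prodRel (fun _ _ : Γ => True) t) := by
  rintro σ ⟨h, hh, f, -, hσ⟩ ⟨γ, δ⟩ ⟨γ', δ'⟩
  rw [hσ, hσ, prodRel_mk, prodRel_mk, true_and, true_and]
  exact ht h hh δ δ'

section Decomposition

variable {r : Γ × Δ → Γ × Δ → Prop} (hr : PermInvariant (wreathSubgroup G H) r)
include hr

lemma PermInvariant.wreath_rel_map_snd (hH : ∀ δ δ' : Δ, ∃ h ∈ H, h δ = δ')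
    {γ γ' : Γ} {δ : Δ} (hγ : r (γ, δ) (γ', δ)) (δ' : Δ) : r (γ, δ') (γ', δ') := by
  obtain ⟨h, hh, rfl⟩ := hH δ δ'
  exact (hr _ (wrPerm_mem_wreathSubgroup (fun _ => one_mem G) hh) _ _).mp hγ

lemma PermInvariant.wreath_rel_right_of_ne (hG : ∀ γ γ' : Γ, ∃ g ∈ G, g γ = γ')
    {γ₁ γ₂ : Γ} {δ δ' : Δ} (hδ : δ ≠ δ') (h : r (γ₁, δ) (γ₂, δ')) (γ : Γ) :
    r (γ₁, δ) (γ, δ') := by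
  classical
  obtain ⟨g, hg, rfl⟩ := hG γ₂ γ
  have hf : ∀ d, (Pi.mulSingle δ' g : Δ → Equiv.Perm Γ) d ∈ G := fun d => by
    rcases eq_or_ne d δ' with rfl | hd
    · simpa using hg
    · simp [hd]
  simpa [Pi.mulSingle_eq_of_ne hδ] using
    (hr _ (wrPerm_mem_wreathSubgroup hf (one_mem H)) _ _).mp h

variable (er : Equivalence r) (hG : ∀ γ γ' : Γ, ∃ g ∈ G, g γ = γ')
include er hG

lemma PermInvariant.wreath_rel_of_ne {γ₁ γ₂ : Γ} {δ δ' : Δ} (hδ : δ ≠ δ')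
    (h : r (γ₁, δ) (γ₂, δ')) (γ γ' : Γ) : r (γ, δ) (γ', δ') :=
  hr.wreath_rel_right_of_ne hG hδ
    (er.symm (hr.wreath_rel_right_of_ne hG hδ.symm (er.symm h) γ)) γ'

lemma PermInvariant.wreath_rel_fst {γ γ' : Γ} {δ δ' : Δ} (h : r (γ, δ) (γ', δ')) :
    r (γ, δ) (γ', δ) := by
  rcases eq_or_ne δ δ' with rfl | hδ
  · exact h
  · exact er.trans (hr.wreath_rel_of_ne er hG hδ h γ γ)
      (er.symm (hr.wreath_rel_of_ne er hG hδ h γ' γ))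

lemma PermInvariant.exists_wreath_eq_prodRel [Nonempty Γ]
    (hH : ∀ δ δ' : Δ, ∃ h ∈ H, h δ = δ') :
    ∃ (s : Γ → Γ → Prop) (t : Δ → Δ → Prop), Equivalence s ∧ Equivalence t ∧
      PermInvariant G s ∧ PermInvariant H t ∧ r = prodRel s t := by
  refine ⟨fun γ γ' => ∀ δ, r (γ, δ) (γ', δ), fun δ δ' => ∃ γ γ', r (γ, δ) (γ', δ'),
    ?_, ?_, ?_, ?_, ?_⟩
  · exact ⟨fun _ _ => er.refl _, fun h δ => er.symm (h δ), fun h h' δ => er.trans (h δ) (h' δ)⟩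
  · refine ⟨fun _ => ⟨Classical.ofNonempty, _, er.refl _⟩,
      fun ⟨γ, γ', h⟩ => ⟨γ', γ, er.symm h⟩, ?_⟩
    rintro δ δ' δ'' ⟨γ₁, γ₂, h⟩ ⟨γ₃, γ₄, h'⟩
    rcases eq_or_ne δ δ' with rfl | hδ
    · exact ⟨γ₃, γ₄, h'⟩
    · exact ⟨γ₁, γ₄, er.trans (hr.wreath_rel_of_ne er hG hδ h γ₁ γ₃) h'⟩
  · exact fun g hg γ γ' => forall_congr' fun δ =>
      hr _ (wrPerm_mem_wreathSubgroup (fun _ => hg) (one_mem H)) _ _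
  · exact fun h hh δ δ' => exists₂_congr fun γ γ' =>
      hr _ (wrPerm_mem_wreathSubgroup (fun _ => one_mem G) hh) _ _
  · ext ⟨γ, δ⟩ ⟨γ', δ'⟩
    refine ⟨fun h => ⟨hr.wreath_rel_map_snd hH (hr.wreath_rel_fst er hG h), γ, γ', h⟩, ?_⟩
    rintro ⟨hs, γ₁, γ₂, h⟩
    rcases eq_or_ne δ δ' with rfl | hδ
    · exact hs δ
    · exact hr.wreath_rel_of_ne er hG hδ h γ γ'

end Decomposition

lemma PermOB.of_wreathSubgroup_left [Nonempty Δ] (hW : PermOB (wreathSubgroup G H)) :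
    PermOB G := by
  intro s s' es es' hs hs' γ γ'
  obtain ⟨δ⟩ := ‹Nonempty Δ›
  have key := congrFun₂ (hW.comp_comm (es.prodRel eq_equivalence) (es'.prodRel eq_equivalence)
    hs.prodRel_eq hs'.prodRel_eq) (γ, δ) (γ', δ)
  rw [comp_prodRel, comp_prodRel, comp_eq] at key
  simp only [prodRel_mk, and_true] at key
  exact key.to_iff

lemma PermOB.of_wreathSubgroup_right [Nonempty Γ] (hW : PermOB (wreathSubgroup G H)) :
    PermOB H := by
  intro t t' et et' ht ht' δ δ'
  obtain ⟨γ⟩ := ‹Nonempty Γ›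
  have key := congrFun₂ (hW.comp_comm ((equivalence_top Γ).prodRel et)
    ((equivalence_top Γ).prodRel et') ht.prodRel_top ht'.prodRel_top) (γ, δ) (γ, δ')
  rw [comp_prodRel, comp_prodRel] at key
  simpa only [prodRel_mk, Comp, and_self, exists_const, true_and] using key.to_iff

lemma PermOB.wreathSubgroup [Nonempty Γ] (hG : ∀ γ γ' : Γ, ∃ g ∈ G, g γ = γ')
    (hH : ∀ δ δ' : Δ, ∃ h ∈ H, h δ = δ') (hOG : PermOB G) (hOH : PermOB H) :
    PermOB (wreathSubgroup G H) := by
  intro r r' er er' hr hr' x z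
  obtain ⟨s, t, es, et, hs, ht, rfl⟩ := hr.exists_wreath_eq_prodRel er hG hH
  obtain ⟨s', t', es', et', hs', ht', rfl⟩ := hr'.exists_wreath_eq_prodRel er' hG hH
  change Comp _ _ x z ↔ Comp _ _ x z
  rw [comp_prodRel, comp_prodRel, hOG.comp_comm es es' hs hs', hOH.comp_comm et et' ht ht']

lemma permOB_wreathSubgroup_iff [Nonempty Γ] [Nonempty Δ]
    (hG : ∀ γ γ' : Γ, ∃ g ∈ G, g γ = γ') (hH : ∀ δ δ' : Δ, ∃ h ∈ H, h δ = δ') :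
    PermOB (wreathSubgroup G H) ↔ PermOB G ∧ PermOB H :=
  ⟨fun hW => ⟨hW.of_wreathSubgroup_left, hW.of_wreathSubgroup_right⟩,
    fun ⟨hOG, hOH⟩ => hOG.wreathSubgroup hG hH hOH⟩

end Wreath

theorem wreath_product_OB_iff_general {Γ Δ : Type*}
    [Nonempty Γ] [Nonempty Δ]
    (G : Subgroup (Equiv.Perm Γ)) (H : Subgroup (Equiv.Perm Δ))
    (hG : ∀ γ γ' : Γ, ∃ g ∈ G, g γ = γ') (hH : ∀ δ δ' : Δ, ∃ h ∈ H, h δ = δ') :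
    ∃ W : Subgroup (Equiv.Perm (Γ × Δ)),
      (W : Set (Equiv.Perm (Γ × Δ))) =
        {σ : Equiv.Perm (Γ × Δ) | ∃ h ∈ H, ∃ f : Δ → Equiv.Perm Γ,
          (∀ δ : Δ, f δ ∈ G) ∧ ∀ (γ : Γ) (δ : Δ), σ (γ, δ) = (f δ γ, h δ)} ∧
      (∀ p q : Γ × Δ, ∃ σ ∈ W, σ p = q) ∧
      (PermOB W ↔ (PermOB G ∧ PermOB H)) :=
  ⟨wreathSubgroup G H, rfl, wreathSubgroup_transitive hG hH, permOB_wreathSubgroup_iff hG hH⟩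

/-- The imprimitive wreath product `G ≀ H`, realised as the set `W` of
permutations `σ` of `Γ × Δ` of the form `σ (γ, δ) = (f δ γ, h δ)` with `h ∈ H` and
`f : Δ → G`, is a transitive subgroup of `Sym(Γ × Δ)`, and it has the OB property
iff both `G` and `H` do. -/
theorem wreath_product_OB_iff {Γ Δ : Type*} [Fintype Γ] [Fintype Δ]
    [Nonempty Γ] [Nonempty Δ]
    (G : Subgroup (Equiv.Perm Γ)) (H : Subgroup (Equiv.Perm Δ))
    (hG : ∀ γ γ' : Γ, ∃ g ∈ G, g γ = γ') (hH : ∀ δ δ' : Δ, ∃ h ∈ H, h δ = δ') :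
    ∃ W : Subgroup (Equiv.Perm (Γ × Δ)),
      (W : Set (Equiv.Perm (Γ × Δ))) =
        {σ : Equiv.Perm (Γ × Δ) | ∃ h ∈ H, ∃ f : Δ → Equiv.Perm Γ,
          (∀ δ : Δ, f δ ∈ G) ∧ ∀ (γ : Γ) (δ : Δ), σ (γ, δ) = (f δ γ, h δ)} ∧
      (∀ p q : Γ × Δ, ∃ σ ∈ W, σ p = q) ∧
      (PermOB W ↔ (PermOB G ∧ PermOB H)) :=
  wreath_product_OB_iff_general G H hG hH
end

section
/- Let Γ and Δ be finite nonempty sets, and let G and H be groups acting transitively on Γ and Δ respectively. Consider the action of G × H on Γ × Δ given by (g,h) • (γ,δ) = (g • γ, h • δ). If G × H with this action has the OB property, then G (on Γ) and H (on Δ) both have the OB property. -/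
/-- The componentwise action of `G × H` on `Γ × Δ`. -/
instance prodProdMulAction {G H Γ Δ : Type*} [Group G] [Group H]
    [MulAction G Γ] [MulAction H Δ] : MulAction (G × H) (Γ × Δ) where
  smul gh x := (gh.1 • x.1, gh.2 • x.2)
  one_smul x := Prod.ext (one_smul _ _) (one_smul _ _)
  mul_smul a b x := Prod.ext (mul_smul _ _ _) (mul_smul _ _ _)

/-- If `G × H`, acting componentwise on `Γ × Δ`, has the OB property,
then so do `G` on `Γ` and `H` on `Δ`. -/
theorem hasOB_factors_of_prod {G H Γ Δ : Type*} [Group G] [Group H]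
    [MulAction G Γ] [MulAction H Δ] [Finite Γ] [Finite Δ] [Nonempty Γ] [Nonempty Δ]
    [MulAction.IsPretransitive G Γ] [MulAction.IsPretransitive H Δ]
    (h : HasOB (G × H) (Γ × Δ)) : HasOB G Γ ∧ HasOB H Δ := by
  constructor
  · intro r s hr hs hir his x z
    have key := h (fun p q => r p.1 q.1) (fun p q => s p.1 q.1)
      ⟨fun p => hr.refl _, fun a => hr.symm a, fun a b => hr.trans a b⟩
      ⟨fun p => hs.refl _, fun a => hs.symm a, fun a b => hs.trans a b⟩
      (fun gh p q => hir gh.1 p.1 q.1)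
      (fun gh p q => his gh.1 p.1 q.1)
    obtain ⟨d⟩ := ‹Nonempty Δ›
    have := key (x, d) (z, d)
    constructor
    · rintro ⟨y, hy1, hy2⟩
      obtain ⟨⟨y', _⟩, h1, h2⟩ := this.mp ⟨(y, d), hy1, hy2⟩
      exact ⟨y', h1, h2⟩
    · rintro ⟨y, hy1, hy2⟩
      obtain ⟨⟨y', _⟩, h1, h2⟩ := this.mpr ⟨(y, d), hy1, hy2⟩
      exact ⟨y', h1, h2⟩
  · intro r s hr hs hir his x z
    have key := h (fun p q => r p.2 q.2) (fun p q => s p.2 q.2)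
      ⟨fun p => hr.refl _, fun a => hr.symm a, fun a b => hr.trans a b⟩
      ⟨fun p => hs.refl _, fun a => hs.symm a, fun a b => hs.trans a b⟩
      (fun gh p q => hir gh.2 p.2 q.2)
      (fun gh p q => his gh.2 p.2 q.2)
    obtain ⟨c⟩ := ‹Nonempty Γ›
    have := key (c, x) (c, z)
    constructor
    · rintro ⟨y, hy1, hy2⟩
      obtain ⟨⟨_, y'⟩, h1, h2⟩ := this.mp ⟨(c, y), hy1, hy2⟩
      exact ⟨y', h1, h2⟩
    · rintro ⟨y, hy1, hy2⟩
      obtain ⟨⟨_, y'⟩, h1, h2⟩ := this.mpr ⟨(c, y), hy1, hy2⟩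
      exact ⟨y', h1, h2⟩
end

section
/- Let Γ and Δ be finite sets, let G and H be groups acting transitively on Γ and Δ respectively, and let Π be a (G × H)-invariant equivalence relation on Γ × Δ (for the componentwise action). Define the projection relation on Γ by: γ ~ γ' iff there exist δ, δ' ∈ Δ with Π (γ,δ) (γ',δ'); and for each δ₀ ∈ Δ define the fibre relation at δ₀ on Γ by: γ ~ γ' iff Π (γ,δ₀) (γ',δ₀). Then the projection relation equals the fibre relation at every δ₀ ∈ Δ if and only if Π is the product r × s of a G-invariant equivalence relation r on Γ and an H-invariant equivalence relation s on Δ. -/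
/-- For a `(G × H)`-invariant equivalence relation `P` on `Γ × Δ`,
the projection relation on `Γ` equals the fibre relation at every point of `Δ`
iff `P` is the product of a `G`-invariant relation on `Γ` and an `H`-invariant
relation on `Δ`. -/
theorem projection_eq_fibre_iff_product {G H Γ Δ : Type*} [Group G] [Group H]
    [MulAction G Γ] [MulAction H Δ] [Finite Γ] [Finite Δ]
    [MulAction.IsPretransitive G Γ] [MulAction.IsPretransitive H Δ]
    (P : Γ × Δ → Γ × Δ → Prop) (hP : Equivalence P)
    (hinv : MulInvariant (G × H) P) :
    (∀ (δ₀ : Δ) (γ γ' : Γ),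
        (∃ δ δ' : Δ, P (γ, δ) (γ', δ')) ↔ P (γ, δ₀) (γ', δ₀)) ↔
    (∃ (r : Γ → Γ → Prop) (s : Δ → Δ → Prop),
        Equivalence r ∧ Equivalence s ∧ MulInvariant G r ∧ MulInvariant H s ∧
        ∀ (γ γ' : Γ) (δ δ' : Δ), P (γ, δ) (γ', δ') ↔ (r γ γ' ∧ s δ δ')) := by
  have smul_def : ∀ (g : G) (h : H) (γ : Γ) (δ : Δ),
      ((g, h) : G × H) • ((γ, δ) : Γ × Δ) = (g • γ, h • δ) := fun _ _ _ _ => rfl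
  constructor
  · intro h
    refine ⟨fun γ γ' => ∀ δ, P (γ, δ) (γ', δ),
           fun δ δ' => ∀ γ, P (γ, δ) (γ, δ'), ?_, ?_, ?_, ?_, ?_⟩
    · exact ⟨fun γ δ => hP.refl _, fun h1 δ => hP.symm (h1 δ),
        fun h1 h2 δ => hP.trans (h1 δ) (h2 δ)⟩
    · exact ⟨fun δ γ => hP.refl _, fun h1 γ => hP.symm (h1 γ),
        fun h1 h2 γ => hP.trans (h1 γ) (h2 γ)⟩
    · intro g γ γ'
      constructor
      · intro h1 δ
        have := (hinv (g, 1) (γ, δ) (γ', δ)).mp (h1 δ)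
        simpa [smul_def] using this
      · intro h1 δ
        have := (hinv (g⁻¹, 1) (g • γ, δ) (g • γ', δ)).mp (h1 δ)
        simpa [smul_def] using this
    · intro hh δ δ'
      constructor
      · intro h1 γ
        have := (hinv (1, hh) (γ, δ) (γ, δ')).mp (h1 γ)
        simpa [smul_def] using this
      · intro h1 γ
        have := (hinv (1, hh⁻¹) (γ, hh • δ) (γ, hh • δ')).mp (h1 γ)
        simpa [smul_def] using this
    · intro γ γ' δ δ'
      constructor
      · intro h1
        have hr : ∀ δ₀, P (γ, δ₀) (γ', δ₀) := fun δ₀ => (h δ₀ γ γ').mp ⟨δ, δ', h1⟩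
        refine ⟨hr, fun γ₀ => ?_⟩
        have h2 : P (γ', δ) (γ', δ') := hP.trans (hP.symm (hr δ)) h1
        obtain ⟨g, hg⟩ := MulAction.exists_smul_eq G γ' γ₀
        have := (hinv (g, 1) (γ', δ) (γ', δ')).mp h2
        simpa [smul_def, hg] using this
      · rintro ⟨hr, hs⟩
        exact hP.trans (hr δ) (hs γ')
  · rintro ⟨r, s, hr, hs, hri, hsi, hprod⟩ δ₀ γ γ'
    constructor
    · rintro ⟨δ, δ', h1⟩
      exact (hprod γ γ' δ₀ δ₀).mpr ⟨((hprod γ γ' δ δ').mp h1).1, hs.refl _⟩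
    · intro h1
      exact ⟨δ₀, δ₀, h1⟩
end

section
/- For each i in a finite index set {1,…,m}, let G_i be a group acting transitively on a set Ω_i, and let G = G_1 × ⋯ × G_m act componentwise on Ω = Ω_1 × ⋯ × Ω_m. If G_i and G_j are partition-orthogonal for all i ≠ j, then every G-invariant equivalence relation on Ω is the product of G_i-invariant equivalence relations: there exist G_i-invariant equivalence relations r_i on Ω_i such that x and y are related iff r_i (x_i) (y_i) for every i. -/
/-- Two group actions are partition-orthogonal if every invariant equivalence
relation for the componentwise product action is a product of invariant
equivalence relations on the two factors. -/
def PartitionOrthogonal (G Γ H Δ : Type*) [Group G] [MulAction G Γ]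
    [Group H] [MulAction H Δ] : Prop :=
  ∀ P : Γ × Δ → Γ × Δ → Prop, Equivalence P → MulInvariant (G × H) P →
    ∃ (r : Γ → Γ → Prop) (s : Δ → Δ → Prop),
      Equivalence r ∧ Equivalence s ∧ MulInvariant G r ∧ MulInvariant H s ∧
      ∀ p q : Γ × Δ, P p q ↔ (r p.1 q.1 ∧ s p.2 q.2)

/-!
Take `r i` to be the slice of `R` along the `i`-th coordinate, the other coordinates being
frozen; by transitivity the frozen values do not matter. Changing one coordinate at a time shows
that the product of the slices is contained in `R`. Conversely, `R x y` implies `r i (x i) (y i)`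
by induction on the set of coordinates other than `i` in which `x` and `y` differ: existentially
forgetting one such coordinate `j` yields again an invariant equivalence relation, and its
`i`-slice is contained in that of `R` because, by orthogonality of `G i` and `G j`, every
`(i, j)`-plane section of `R` is a product relation.
-/

open Function

theorem MulInvariant.of_imp {G Ω : Type*} [Group G] [MulAction G Ω] {r : Ω → Ω → Prop}
    (h : ∀ (g : G) x y, r x y → r (g • x) (g • y)) : MulInvariant G r := fun g x y =>
  ⟨h g x y, fun hg => by simpa using h g⁻¹ _ _ hg⟩

theorem Pi.update_smul_update {ι : Type*} [DecidableEq ι] {M α : ι → Type*}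
    [∀ i, SMul (M i) (α i)] (k : ∀ i, M i) (x : ∀ i, α i) (i : ι) (g : M i) (a : α i) :
    update k i g • update x i a = update (k • x) i (g • a) :=
  funext fun j => apply_update₂ (fun _ => (· • ·)) k x i g a j

instance Pi.isPretransitive {ι : Type*} {M α : ι → Type*} [∀ i, SMul (M i) (α i)]
    [∀ i, MulAction.IsPretransitive (M i) (α i)] :
    MulAction.IsPretransitive (∀ i, M i) (∀ i, α i) :=
  ⟨fun x y => ⟨fun i => (MulAction.exists_smul_eq (M i) (x i) (y i)).choose,
    funext fun i => (MulAction.exists_smul_eq (M i) (x i) (y i)).choose_spec⟩⟩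

section

variable {ι : Type*} [DecidableEq ι] {Ω : ι → Type*} {R : (∀ i, Ω i) → (∀ i, Ω i) → Prop}

variable (R) in
def sliceRel (i : ι) (a b : Ω i) : Prop :=
  ∀ w, R (update w i a) (update w i b)

variable (R) in
def sliceRel₂ (w : ∀ i, Ω i) (i j : ι) (p q : Ω i × Ω j) : Prop :=
  R (update (update w i p.1) j p.2) (update (update w i q.1) j q.2)

variable (R) in
def forgetRel (j : ι) (x y : ∀ i, Ω i) : Prop :=
  ∃ e e', R (update x j e) (update y j e')

theorem Equivalence.sliceRel (hR : Equivalence R) (i : ι) : Equivalence (sliceRel R i) :=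
  ⟨fun _ _ => hR.refl _, fun h w => hR.symm (h w), fun h h' w => hR.trans (h w) (h' w)⟩

theorem Equivalence.sliceRel₂ (hR : Equivalence R) (w : ∀ i, Ω i) (i j : ι) :
    Equivalence (sliceRel₂ R w i j) :=
  ⟨fun _ => hR.refl _, hR.symm, hR.trans⟩

theorem rel_of_forall_sliceRel [Fintype ι] (hR : Equivalence R) {x y : ∀ i, Ω i}
    (h : ∀ i, sliceRel R i (x i) (y i)) : R x y := by
  suffices ∀ s : Finset ι, R x (s.piecewise y x) by simpa using this Finset.univ
  intro s
  induction s using Finset.induction_on with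
  | empty => simpa using hR.refl x
  | @insert j s hj ih =>
    have hstep := h j (s.piecewise y x)
    rw [← Finset.piecewise_eq_of_notMem s y x hj, update_eq_self] at hstep
    rw [Finset.piecewise_insert]
    exact hR.trans ih hstep

variable {G : ι → Type*} [∀ i, Group (G i)] [∀ i, MulAction (G i) (Ω i)]

theorem MulInvariant.sliceRel (hinv : MulInvariant (∀ i, G i) R) (i : ι) :
    MulInvariant (G i) (sliceRel R i) :=
  .of_imp fun g a b h w => by
    simpa [Pi.update_smul_update] using (hinv (update 1 i g) _ _).mp (h w)

theorem MulInvariant.sliceRel₂ (hinv : MulInvariant (∀ i, G i) R) (w : ∀ i, Ω i) (i j : ι) :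
    MulInvariant (G i × G j) (sliceRel₂ R w i j) := by
  rintro ⟨g, h⟩ ⟨a, e⟩ ⟨a', e'⟩
  have := hinv (update (update 1 i g) j h) (update (update w i a) j e) (update (update w i a') j e')
  rwa [Pi.update_smul_update, Pi.update_smul_update, Pi.update_smul_update,
    Pi.update_smul_update, one_smul] at this

theorem MulInvariant.forgetRel (hinv : MulInvariant (∀ i, G i) R) (j : ι) :
    MulInvariant (∀ i, G i) (forgetRel R j) :=
  .of_imp fun k x y ⟨e, e', h⟩ => ⟨k j • e, k j • e', by
    simpa only [← Pi.update_smul_update, update_eq_self] using (hinv k _ _).mp h⟩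

theorem sliceRel_of_sliceRel_forgetRel (hR : Equivalence R) (hinv : MulInvariant (∀ i, G i) R)
    {i j : ι} (hij : i ≠ j) (horth : PartitionOrthogonal (G i) (Ω i) (G j) (Ω j)) {a b : Ω i}
    (h : sliceRel (forgetRel R j) i a b) : sliceRel R i a b := by
  intro w
  obtain ⟨r, s, -, hs, -, -, hsplit⟩ := horth _ (hR.sliceRel₂ w i j) (hinv.sliceRel₂ w i j)
  obtain ⟨e, e', he⟩ := h w
  have hr : r a b := ((hsplit (a, e) (b, e')).mp he).1
  have hw : ∀ c, update (update w i c) j (w j) = update w i c := fun c => by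
    rw [← update_of_ne hij.symm c w, update_eq_self]
  simpa only [_root_.sliceRel₂, hw] using (hsplit (a, w j) (b, w j)).mpr ⟨hr, hs.refl _⟩

variable [∀ i, MulAction.IsPretransitive (G i) (Ω i)]

theorem sliceRel_iff (hinv : MulInvariant (∀ i, G i) R) {i : ι} {a b : Ω i} (w : ∀ i, Ω i) :
    sliceRel R i a b ↔ R (update w i a) (update w i b) := by
  refine ⟨fun h => h w, fun h w' => ?_⟩
  obtain ⟨k, rfl⟩ := MulAction.exists_smul_eq (∀ i, G i) w w'
  simpa [Pi.update_smul_update] using (hinv (update k i 1) _ _).mp h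

theorem Equivalence.forgetRel (hR : Equivalence R) (hinv : MulInvariant (∀ i, G i) R) (j : ι) :
    Equivalence (forgetRel R j) := by
  refine ⟨fun x => ⟨x j, x j, hR.refl _⟩, fun ⟨e, e', h⟩ => ⟨e', e, hR.symm h⟩, ?_⟩
  rintro x y z ⟨a, a', hxy⟩ ⟨b, b', hyz⟩
  obtain ⟨g, rfl⟩ := MulAction.exists_smul_eq (G j) b a'
  refine ⟨a, g • b', hR.trans hxy ?_⟩
  simpa [Pi.update_smul_update] using (hinv (update 1 j g) _ _).mp hyz

theorem sliceRel_of_rel_of_eq_off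
    (horth : ∀ i j, i ≠ j → PartitionOrthogonal (G i) (Ω i) (G j) (Ω j))
    (hR : Equivalence R) (hinv : MulInvariant (∀ i, G i) R) {i : ι} {x y : ∀ i, Ω i}
    (s : Finset ι) (hxy : ∀ j ∉ s, j ≠ i → x j = y j) (h : R x y) :
    sliceRel R i (x i) (y i) := by
  induction s using Finset.induction_on generalizing R x y with
  | empty =>
    have hy : update x i (y i) = y := funext fun j => by
      rcases eq_or_ne j i with rfl | hji
      · exact update_self ..
      · rw [update_of_ne hji, hxy j (Finset.notMem_empty j) hji]
    rwa [sliceRel_iff hinv x, update_eq_self, hy]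
  | @insert j s hj ih =>
    rcases eq_or_ne i j with rfl | hij
    · exact ih hR hinv (fun k hk hki => hxy k (by simp [hk, hki]) hki) h
    apply sliceRel_of_sliceRel_forgetRel hR hinv hij (horth i j hij)
    have hT : forgetRel R j (update x j (y j)) y :=
      ⟨x j, y j, by rwa [update_idem, update_eq_self, update_eq_self]⟩
    have hxy' : ∀ k ∉ s, k ≠ i → update x j (y j) k = y k := fun k hk hki => by
      rcases eq_or_ne k j with rfl | hkj
      · exact update_self ..
      · rw [update_of_ne hkj, hxy k (by simp [hk, hkj]) hki]
    simpa only [update_of_ne hij] using ih (hR.forgetRel hinv j) (hinv.forgetRel j) hxy' hT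

end

/-- If the transitive groups `G i` are pairwise partition-orthogonal,
then every invariant equivalence relation of the product group acting
componentwise on the product set is a product of invariant equivalence relations
on the factors. -/
theorem invariant_relations_of_pairwise_orthogonal {ι : Type*} [Fintype ι]
    {Ω : ι → Type*} {G : ι → Type*} [∀ i, Group (G i)] [∀ i, MulAction (G i) (Ω i)]
    [∀ i, MulAction.IsPretransitive (G i) (Ω i)]
    (horth : ∀ i j, i ≠ j → PartitionOrthogonal (G i) (Ω i) (G j) (Ω j))
    (R : (∀ i, Ω i) → (∀ i, Ω i) → Prop) (hR : Equivalence R)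
    (hinv : MulInvariant (∀ i, G i) R) :
    ∃ r : ∀ i, Ω i → Ω i → Prop,
      (∀ i, Equivalence (r i) ∧ MulInvariant (G i) (r i)) ∧
      ∀ x y : ∀ i, Ω i, R x y ↔ ∀ i, r i (x i) (y i) := by
  classical
  refine ⟨sliceRel R, fun i => ⟨hR.sliceRel i, hinv.sliceRel i⟩, fun x y =>
    ⟨fun h i => ?_, rel_of_forall_sliceRel hR⟩⟩
  exact sliceRel_of_rel_of_eq_off horth hR hinv Finset.univ
    (fun j hj => absurd (Finset.mem_univ j) hj) h
end

section
/- For each i in a finite index set {1,…,m}, let G_i be a group acting transitively on a set Ω_i, and let H be a group acting transitively on a set Δ. If H is partition-orthogonal to G_i for every i, then H is partition-orthogonal to the product G_1 × ⋯ × G_m acting componentwise on Ω_1 × ⋯ × Ω_m. -/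
/-- To check invariance of a relation it suffices to check one direction. -/
lemma mulInvariant_of_imp {K X : Type*} [Group K] [MulAction K X] {r : X → X → Prop}
    (h : ∀ (k : K) (x y : X), r x y → r (k • x) (k • y)) : MulInvariant K r := by
  intro k x y
  constructor
  · exact h k x y
  · intro hr
    have := h k⁻¹ _ _ hr
    simpa using this

/-- If `H` is partition-orthogonal to each transitive group `G i`,
then `H` is partition-orthogonal to their product, acting componentwise. -/
theorem partitionOrthogonal_pi {ι : Type*} [Fintype ι]
    {Ω : ι → Type*} {G : ι → Type*} [∀ i, Group (G i)] [∀ i, MulAction (G i) (Ω i)]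
    [∀ i, MulAction.IsPretransitive (G i) (Ω i)]
    {H Δ : Type*} [Group H] [MulAction H Δ] [MulAction.IsPretransitive H Δ]
    (h : ∀ i, PartitionOrthogonal H Δ (G i) (Ω i)) :
    PartitionOrthogonal H Δ (∀ i, G i) (∀ i, Ω i) := by
  classical
  intro P hPe hPinv
  by_cases hne : Nonempty (Δ × ∀ i, Ω i)
  swap
  · refine ⟨fun _ _ => True, fun _ _ => True, ⟨fun _ => trivial, fun _ => trivial, fun _ _ => trivial⟩,
      ⟨fun _ => trivial, fun _ => trivial, fun _ _ => trivial⟩,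
      fun _ _ _ => Iff.rfl, fun _ _ _ => Iff.rfl, fun p q => absurd ⟨p⟩ hne⟩
  obtain ⟨δstar, xstar⟩ := hne
  -- one-directional invariance helper
  have key : ∀ (a : H) (g : ∀ i, G i) (δ : Δ) (x : ∀ i, Ω i) (δ' : Δ) (y : ∀ i, Ω i),
      P (δ, x) (δ', y) → P (a • δ, g • x) (a • δ', g • y) := by
    intro a g δ x δ' y hp
    exact (hPinv (a, g) (δ, x) (δ', y)).mp hp
  have htΔ : ∀ δ δ' : Δ, ∃ a : H, a • δ = δ' := fun δ δ' => MulAction.exists_smul_eq H δ δ'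
  have htΩ : ∀ x y : ∀ i, Ω i, ∃ g : ∀ i, G i, g • x = y := by
    intro x y
    refine ⟨fun i => Classical.choose (MulAction.exists_smul_eq (G i) (x i) (y i)), funext fun i => ?_⟩
    exact Classical.choose_spec (MulAction.exists_smul_eq (G i) (x i) (y i))
  -- main claim by induction on finsets of coordinates
  have claim : ∀ s : Finset ι, ∀ δ δ' : Δ, (∃ u v, P (δ, u) (δ', v)) →
      ∃ u v, (∀ j ∈ s, u j = v j) ∧ P (δ, u) (δ', v) := by
    intro s
    induction s using Finset.induction_on with
    | empty =>
      intro δ δ' ⟨u, v, hp⟩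
      exact ⟨u, v, fun j hj => absurd hj (Finset.notMem_empty j), hp⟩
    | @insert i s hi IH =>
      intro δ δ' hF
      obtain ⟨u, v, huv, hP⟩ := IH δ δ' hF
      -- the auxiliary relation on Δ × Ω i
      set D : Δ × Ω i → Δ × Ω i → Prop := fun p q =>
        ∃ u v : ∀ j, Ω j, u i = p.2 ∧ v i = q.2 ∧ (∀ j ∈ s, u j = v j) ∧ P (p.1, u) (q.1, v) with hD
      have hDe : Equivalence D := by
        constructor
        · rintro ⟨δ₀, a⟩
          exact ⟨Function.update xstar i a, Function.update xstar i a,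
            Function.update_self i a xstar, Function.update_self i a xstar,
            fun j _ => rfl, hPe.refl _⟩
        · rintro ⟨δ₁, a⟩ ⟨δ₂, b⟩ ⟨u, v, hu, hv, hs, hp⟩
          exact ⟨v, u, hv, hu, fun j hj => (hs j hj).symm, hPe.symm hp⟩
        · rintro ⟨δ₁, a⟩ ⟨δ₂, b⟩ ⟨δ₃, c⟩ ⟨u, v, hu, hv, hs, hp⟩ ⟨u', v', hu', hv', hs', hp'⟩
          obtain ⟨g, hgi, hgo⟩ : ∃ g : ∀ j, G j, g i = 1 ∧ ∀ j, j ≠ i → g j • u' j = v j := by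
            refine ⟨fun j => if hj : j = i then (1 : G j)
              else Classical.choose (MulAction.exists_smul_eq (G j) (u' j) (v j)), ?_, ?_⟩
            · exact dif_pos rfl
            · intro j hj
              simp only [dif_neg hj]
              exact Classical.choose_spec (MulAction.exists_smul_eq (G j) (u' j) (v j))
          have hgu' : g • u' = v := by
            funext j
            show g j • u' j = v j
            by_cases hj : j = i
            · subst hj
              rw [hgi, one_smul, hu', hv]
            · exact hgo j hj
          have hstep : P (δ₂, v) (δ₃, g • v') := by
            have := key 1 g δ₂ u' δ₃ v' hp'
            rwa [one_smul, one_smul, hgu'] at this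
          refine ⟨u, g • v', hu, ?_, ?_, hPe.trans hp hstep⟩
          · show g i • v' i = c
            rw [hgi, one_smul]; exact hv'
          · intro j hj
            have hji : j ≠ i := fun hji => hi (hji ▸ hj)
            have h2 : (g • v') j = v j := by
              show g j • v' j = v j
              rw [← hs' j hj]
              exact hgo j hji
            rw [h2]
            exact hs j hj
      have hDinv : MulInvariant (H × G i) D := by
        apply mulInvariant_of_imp
        rintro ⟨a, gi⟩ ⟨δ₁, b⟩ ⟨δ₂, c⟩ ⟨u, v, hu, hv, hs, hp⟩
        refine ⟨Pi.mulSingle i gi • u, Pi.mulSingle i gi • v, ?_, ?_, ?_, ?_⟩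
        · show Pi.mulSingle i gi i • u i = gi • b
          rw [Pi.mulSingle_eq_same, hu]
        · show Pi.mulSingle i gi i • v i = gi • c
          rw [Pi.mulSingle_eq_same, hv]
        · intro j hj
          have hji : j ≠ i := fun hji => hi (hji ▸ hj)
          show Pi.mulSingle i gi j • u j = Pi.mulSingle i gi j • v j
          rw [hs j hj]
        · exact key a (Pi.mulSingle i gi) δ₁ u δ₂ v hp
      obtain ⟨ρ, σ, hρe, hσe, _, _, hDiff⟩ := h i D hDe hDinv
      have hD1 : D (δ, u i) (δ', v i) := ⟨u, v, rfl, rfl, huv, hP⟩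
      have hρδ : ρ δ δ' := ((hDiff (δ, u i) (δ', v i)).mp hD1).1
      have hD2 : D (δ, u i) (δ', u i) :=
        (hDiff (δ, u i) (δ', u i)).mpr ⟨hρδ, hσe.refl (u i)⟩
      obtain ⟨u', v', hu'i, hv'i, hs', hp'⟩ := hD2
      refine ⟨u', v', ?_, hp'⟩
      intro j hj
      rcases Finset.mem_insert.mp hj with hj | hj
      · subst hj
        rw [hu'i, hv'i]
      · exact hs' j hj
  -- consequence of the claim: "related at all" implies diagonal relation
  have hr_all : ∀ δ δ' : Δ, (∃ u v, P (δ, u) (δ', v)) → ∀ x, P (δ, x) (δ', x) := by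
    intro δ δ' hF x
    obtain ⟨u, v, hall, hp⟩ := claim Finset.univ δ δ' hF
    have huv : u = v := funext fun j => hall j (Finset.mem_univ j)
    subst huv
    obtain ⟨g, hg⟩ := htΩ u x
    have := key 1 g δ u δ' u hp
    simpa only [one_smul, hg] using this
  refine ⟨fun δ δ' => ∃ u v, P (δ, u) (δ', v), fun x y => ∃ δ₀, P (δ₀, x) (δ₀, y),
    ?_, ?_, ?_, ?_, ?_⟩
  · constructor
    · intro δ; exact ⟨xstar, xstar, hPe.refl _⟩
    · rintro δ δ' ⟨u, v, hp⟩; exact ⟨v, u, hPe.symm hp⟩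
    · rintro δ δ' δ'' h1 h2
      exact ⟨xstar, xstar, hPe.trans (hr_all δ δ' h1 xstar) (hr_all δ' δ'' h2 xstar)⟩
  · constructor
    · intro x; exact ⟨δstar, hPe.refl _⟩
    · rintro x y ⟨δ₀, hp⟩; exact ⟨δ₀, hPe.symm hp⟩
    · rintro x y z ⟨δ₁, h1⟩ ⟨δ₂, h2⟩
      obtain ⟨a, ha⟩ := htΔ δ₂ δ₁
      have := key a 1 δ₂ y δ₂ z h2
      rw [one_smul, one_smul, ha] at this
      exact ⟨δ₁, hPe.trans h1 this⟩
  · apply mulInvariant_of_imp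
    rintro a δ δ' ⟨u, v, hp⟩
    have := key a 1 δ u δ' v hp
    simp only [one_smul] at this
    exact ⟨u, v, this⟩
  · apply mulInvariant_of_imp
    rintro g x y ⟨δ₀, hp⟩
    have := key 1 g δ₀ x δ₀ y hp
    simp only [one_smul] at this
    exact ⟨δ₀, this⟩
  · rintro ⟨δ, x⟩ ⟨δ', y⟩
    constructor
    · intro hp
      have h1 : P (δ, x) (δ', x) := hr_all δ δ' ⟨x, y, hp⟩ x
      exact ⟨⟨x, y, hp⟩, δ', hPe.trans (hPe.symm h1) hp⟩
    · rintro ⟨hr, δ₀, hs⟩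
      have h1 : P (δ, x) (δ', x) := hr_all δ δ' hr x
      obtain ⟨a, ha⟩ := htΔ δ₀ δ'
      have h2 := key a 1 δ₀ x δ₀ y hs
      rw [one_smul, one_smul, ha] at h2
      exact hPe.trans h1 h2
end

section
/- Let G be a group acting transitively on Γ and H a group acting transitively on Δ, and suppose G and H are partition-orthogonal and both pre-primitive. Then G × H, acting componentwise on Γ × Δ, is pre-primitive. -/
/-- A transitive group action is pre-primitive if every invariant equivalence
relation is the orbit equivalence relation of some subgroup. -/
def PrePrimitive (G Ω : Type*) [Group G] [MulAction G Ω] : Prop :=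
  ∀ r : Ω → Ω → Prop, Equivalence r → MulInvariant G r →
    ∃ N : Subgroup G, ∀ x y : Ω, r x y ↔ ∃ n ∈ N, n • x = y

/-- The product of partition-orthogonal pre-primitive transitive
groups, acting componentwise, is pre-primitive. -/
theorem prePrimitive_prod {G H Γ Δ : Type*} [Group G] [Group H]
    [MulAction G Γ] [MulAction H Δ]
    [MulAction.IsPretransitive G Γ] [MulAction.IsPretransitive H Δ]
    (horth : PartitionOrthogonal G Γ H Δ)
    (hG : PrePrimitive G Γ) (hH : PrePrimitive H Δ) :
    PrePrimitive (G × H) (Γ × Δ) := by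
  intro P hPeq hPinv
  obtain ⟨r, s, hre, hse, hri, hsi, hprod⟩ := horth P hPeq hPinv
  obtain ⟨N, hN⟩ := hG r hre hri
  obtain ⟨M, hM⟩ := hH s hse hsi
  refine ⟨N.prod M, fun x y => ?_⟩
  rw [hprod, hN, hM]
  constructor
  · rintro ⟨⟨n, hn, hnx⟩, ⟨m, hm, hmx⟩⟩
    exact ⟨(n, m), ⟨hn, hm⟩, Prod.ext hnx hmx⟩
  · rintro ⟨⟨n, m⟩, ⟨hn, hm⟩, h⟩
    exact ⟨⟨n, hn, congrArg Prod.fst h⟩, ⟨m, hm, congrArg Prod.snd h⟩⟩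
end

section
/- Let G be a group acting transitively on a set Ω, let α ∈ Ω, and let N be a normal subgroup of G that acts regularly on Ω (i.e., N is transitive on Ω and the stabiliser of α in N is trivial). Then G has the OB property if and only if any two subgroups of N that are normalised by the stabiliser of α in G commute: for all subgroups K, L of G contained in N with g K g⁻¹ = K and g L g⁻¹ = L for every g in the stabiliser of α, one has K L = L K as subsets of G. -/
open scoped Pointwise

/-- The relation on `Ω` attached to a subgroup `K` of `N`. -/
def pointRel {G Ω : Type*} [Group G] [MulAction G Ω] (α : Ω) (N K : Subgroup G)
    (x y : Ω) : Prop :=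
  ∃ p q : G, p ∈ N ∧ q ∈ N ∧ p • α = x ∧ q • α = y ∧ p⁻¹ * q ∈ K

section Aux

variable {G Ω : Type*} [Group G] [MulAction G Ω] (α : Ω) (N : Subgroup G) [N.Normal]

theorem aux_uniq (hfree : ∀ n ∈ N, n • α = α → n = 1) :
    ∀ n ∈ N, ∀ m ∈ N, n • α = m • α → n = m := by
  intro n hn m hm h
  have h1 : (m⁻¹ * n) • α = α := by
    rw [mul_smul, h, ← mul_smul, inv_mul_cancel, one_smul]
  have h2 := hfree _ (mul_mem (inv_mem hm) hn) h1
  exact (inv_mul_eq_one.mp h2).symm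

theorem aux_equiv (htrans : ∀ x y : Ω, ∃ n ∈ N, n • x = y)
    (hfree : ∀ n ∈ N, n • α = α → n = 1) (K : Subgroup G) :
    Equivalence (pointRel α N K) := by
  constructor
  · intro x
    obtain ⟨n, hn, hnx⟩ := htrans α x
    exact ⟨n, n, hn, hn, hnx, hnx, by simpa using K.one_mem⟩
  · rintro x y ⟨p, q, hp, hq, hpx, hqy, hk⟩
    exact ⟨q, p, hq, hp, hqy, hpx, by simpa [mul_inv_rev] using inv_mem hk⟩
  · rintro x y z ⟨p, q, hp, hq, hpx, hqy, hk⟩ ⟨p', q', hp', hq', hp'y, hq'z, hk'⟩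
    have he : p' = q := aux_uniq α N hfree p' hp' q hq (hp'y.trans hqy.symm)
    subst he
    exact ⟨p, q', hp, hq', hpx, hq'z, by simpa [mul_assoc] using mul_mem hk hk'⟩

theorem aux_mono (htrans : ∀ x y : Ω, ∃ n ∈ N, n • x = y) (K : Subgroup G)
    (hK : ∀ g ∈ MulAction.stabilizer G α,
      Subgroup.map (MulAut.conj g).toMonoidHom K = K) :
    ∀ (g : G) (x y : Ω), pointRel α N K x y → pointRel α N K (g • x) (g • y) := by
  rintro g x y ⟨p, q, hp, hq, hpx, hqy, hk⟩
  obtain ⟨n, hn, hng⟩ := htrans α (g • α)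
  have hh : n⁻¹ * g ∈ MulAction.stabilizer G α := by
    rw [MulAction.mem_stabilizer_iff, mul_smul, ← hng, ← mul_smul, inv_mul_cancel,
      one_smul]
  have hα : (g⁻¹ * n) • α = α := by
    rw [mul_smul, hng, ← mul_smul, inv_mul_cancel, one_smul]
  refine ⟨g * p * g⁻¹ * n, g * q * g⁻¹ * n,
    mul_mem (Subgroup.Normal.conj_mem ‹N.Normal› p hp g) hn,
    mul_mem (Subgroup.Normal.conj_mem ‹N.Normal› q hq g) hn, ?_, ?_, ?_⟩
  · rw [show g * p * g⁻¹ * n = g * (p * (g⁻¹ * n)) by group, mul_smul, mul_smul, hα, hpx]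
  · rw [show g * q * g⁻¹ * n = g * (q * (g⁻¹ * n)) by group, mul_smul, mul_smul, hα, hqy]
  · have hmem := Subgroup.mem_map_of_mem (MulAut.conj (n⁻¹ * g)).toMonoidHom hk
    rw [hK _ hh] at hmem
    have heq : (MulAut.conj (n⁻¹ * g)).toMonoidHom (p⁻¹ * q)
        = (g * p * g⁻¹ * n)⁻¹ * (g * q * g⁻¹ * n) := by
      simp only [MulEquiv.coe_toMonoidHom, MulAut.conj_apply]
      group
    rwa [heq] at hmem

theorem aux_inv (htrans : ∀ x y : Ω, ∃ n ∈ N, n • x = y) (K : Subgroup G)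
    (hK : ∀ g ∈ MulAction.stabilizer G α,
      Subgroup.map (MulAut.conj g).toMonoidHom K = K) :
    MulInvariant G (pointRel α N K) := by
  intro g x y
  constructor
  · exact aux_mono α N htrans K hK g x y
  · intro h
    have := aux_mono α N htrans K hK g⁻¹ _ _ h
    simpa using this

theorem aux_comp (hfree : ∀ n ∈ N, n • α = α → n = 1)
    (K L : Subgroup G) (hKN : K ≤ N) (hLN : L ≤ N)
    (x z : Ω) (n c : G) (hn : n ∈ N) (hc : c ∈ N) (hnx : n • α = x) (hcz : c • α = z) :
    (∃ y, pointRel α N K x y ∧ pointRel α N L y z) ↔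
      n⁻¹ * c ∈ (K : Set G) * (L : Set G) := by
  constructor
  · rintro ⟨y, ⟨p, q, hp, hq, hpx, hqy, hk⟩, ⟨p', q', hp', hq', hp'y, hq'z, hl⟩⟩
    have h1 : p = n := aux_uniq α N hfree p hp n hn (hpx.trans hnx.symm)
    have h2 : p' = q := aux_uniq α N hfree p' hp' q hq (hp'y.trans hqy.symm)
    have h3 : q' = c := aux_uniq α N hfree q' hq' c hc (hq'z.trans hcz.symm)
    subst h1; subst h2; subst h3
    exact ⟨p⁻¹ * p', hk, p'⁻¹ * q', hl, by group⟩
  · intro hm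
    rw [Set.mem_mul] at hm
    obtain ⟨k, hk, l, hl, hkl⟩ := hm
    have hkK : k ∈ K := hk
    have hlL : l ∈ L := hl
    have hnk : n * k ∈ N := mul_mem hn (hKN hkK)
    refine ⟨(n * k) • α, ⟨n, n * k, hn, hnk, hnx, rfl, by simpa using hkK⟩,
      ⟨n * k, c, hnk, hc, rfl, hcz, ?_⟩⟩
    have h2 : (n * k)⁻¹ * c = l := by
      rw [mul_inv_rev, mul_assoc, ← hkl, inv_mul_cancel_left]
    rwa [h2]

/-- The subgroup attached to an invariant equivalence relation. -/
def relSubgroup (t : Ω → Ω → Prop) (ht : Equivalence t) (htinv : MulInvariant G t) :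
    Subgroup G where
  carrier := {n : G | n ∈ N ∧ t α (n • α)}
  one_mem' := ⟨N.one_mem, by simpa using ht.refl α⟩
  mul_mem' := by
    rintro a b ⟨haN, hat⟩ ⟨hbN, hbt⟩
    refine ⟨mul_mem haN hbN, ht.trans hat ?_⟩
    have := (htinv a α (b • α)).mp hbt
    rwa [mul_smul]
  inv_mem' := by
    rintro a ⟨haN, hat⟩
    refine ⟨inv_mem haN, ht.symm ?_⟩
    have := (htinv a⁻¹ α (a • α)).mp hat
    simpa using this

theorem relSubgroup_mem (t : Ω → Ω → Prop) (ht : Equivalence t)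
    (htinv : MulInvariant G t) (n : G) :
    n ∈ relSubgroup α N t ht htinv ↔ n ∈ N ∧ t α (n • α) := Iff.rfl

theorem relSubgroup_norm (t : Ω → Ω → Prop) (ht : Equivalence t)
    (htinv : MulInvariant G t) :
    ∀ g ∈ MulAction.stabilizer G α,
      Subgroup.map (MulAut.conj g).toMonoidHom (relSubgroup α N t ht htinv)
        = relSubgroup α N t ht htinv := by
  have hstep : ∀ g₀ : G, g₀ • α = α → ∀ k : G, k ∈ relSubgroup α N t ht htinv →
      g₀ * k * g₀⁻¹ ∈ relSubgroup α N t ht htinv := by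
    intro g₀ hg₀ k hk
    obtain ⟨hkN, hkt⟩ := (relSubgroup_mem α N t ht htinv k).mp hk
    have hinvα : g₀⁻¹ • α = α := by rw [← hg₀, inv_smul_smul, hg₀]
    refine (relSubgroup_mem α N t ht htinv _).mpr
      ⟨Subgroup.Normal.conj_mem ‹N.Normal› k hkN g₀, ?_⟩
    have h1 : (g₀ * k * g₀⁻¹) • α = g₀ • (k • α) := by
      rw [mul_smul, hinvα, mul_smul]
    rw [h1]
    have := (htinv g₀ α (k • α)).mp hkt
    rwa [hg₀] at this
  intro g hg
  have hg' : g • α = α := hg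
  apply le_antisymm
  · rintro x hx
    rw [Subgroup.mem_map] at hx
    obtain ⟨k, hk, rfl⟩ := hx
    simpa using hstep g hg' k hk
  · intro k hk
    rw [Subgroup.mem_map]
    refine ⟨g⁻¹ * k * g, ?_, ?_⟩
    · have := hstep g⁻¹ (by rw [← hg', inv_smul_smul, hg']) k hk
      simpa using this
    · simp only [MulEquiv.coe_toMonoidHom, MulAut.conj_apply]
      group

end Aux

/-- If a transitive group `G` on `Ω` has a regular normal subgroup
`N`, then `G` has the OB property iff the subgroups of `N` normalised by a point
stabiliser commute pairwise. -/
theorem hasOB_iff_of_regular_normal {G Ω : Type*} [Group G] [MulAction G Ω]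
    [MulAction.IsPretransitive G Ω] (α : Ω) (N : Subgroup G) [N.Normal]
    (htrans : ∀ x y : Ω, ∃ n ∈ N, n • x = y)
    (hfree : ∀ n ∈ N, n • α = α → n = 1) :
    HasOB G Ω ↔
      ∀ K L : Subgroup G, K ≤ N → L ≤ N →
        (∀ g ∈ MulAction.stabilizer G α,
          Subgroup.map (MulAut.conj g).toMonoidHom K = K) →
        (∀ g ∈ MulAction.stabilizer G α,
          Subgroup.map (MulAut.conj g).toMonoidHom L = L) →
        (K : Set G) * (L : Set G) = (L : Set G) * (K : Set G) := by
  constructor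
  · intro hOB K L hKN hLN hKH hLH
    ext c
    have key : ∀ (A B : Subgroup G), A ≤ N → B ≤ N →
        (∀ g ∈ MulAction.stabilizer G α,
          Subgroup.map (MulAut.conj g).toMonoidHom A = A) →
        (∀ g ∈ MulAction.stabilizer G α,
          Subgroup.map (MulAut.conj g).toMonoidHom B = B) →
        c ∈ (A : Set G) * (B : Set G) → c ∈ (B : Set G) * (A : Set G) := by
      intro A B hAN hBN hAH hBH hc
      have hcN : c ∈ N := by
        rw [Set.mem_mul] at hc
        obtain ⟨k, hk, l, hl, rfl⟩ := hc
        exact mul_mem (hAN hk) (hBN hl)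
      have h1 := aux_comp α N hfree A B hAN hBN α (c • α) 1 c N.one_mem hcN
        (one_smul G α) rfl
      have h2 := aux_comp α N hfree B A hBN hAN α (c • α) 1 c N.one_mem hcN
        (one_smul G α) rfl
      simp only [inv_one, one_mul] at h1 h2
      exact h2.mp ((hOB (pointRel α N A) (pointRel α N B)
        (aux_equiv α N htrans hfree A) (aux_equiv α N htrans hfree B)
        (aux_inv α N htrans A hAH) (aux_inv α N htrans B hBH) α (c • α)).mp (h1.mpr hc))
    exact ⟨key K L hKN hLN hKH hLH, key L K hLN hKN hLH hKH⟩
  · intro hcom r s hr hs hrinv hsinv x z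
    set K := relSubgroup α N r hr hrinv with hKdef
    set L := relSubgroup α N s hs hsinv with hLdef
    have hKN : K ≤ N := fun n hn => hn.1
    have hLN : L ≤ N := fun n hn => hn.1
    have hKH := relSubgroup_norm α N r hr hrinv
    have hLH := relSubgroup_norm α N s hs hsinv
    have hKt : ∀ x y, r x y ↔ pointRel α N K x y := by
      intro x y
      obtain ⟨p, hp, hpx⟩ := htrans α x
      obtain ⟨q, hq, hqy⟩ := htrans α y
      constructor
      · intro h
        refine ⟨p, q, hp, hq, hpx, hqy, mul_mem (inv_mem hp) hq, ?_⟩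
        have := (hrinv p⁻¹ x y).mp h
        rw [← hpx, ← hqy, inv_smul_smul, ← mul_smul] at this
        exact this
      · rintro ⟨p', q', hp', hq', hp'x, hq'y, hk⟩
        obtain ⟨-, hrk⟩ := hk
        have := (hrinv p' α ((p'⁻¹ * q') • α)).mp hrk
        rwa [← mul_smul, mul_inv_cancel_left, hp'x, hq'y] at this
    have hLt : ∀ x y, s x y ↔ pointRel α N L x y := by
      intro x y
      obtain ⟨p, hp, hpx⟩ := htrans α x
      obtain ⟨q, hq, hqy⟩ := htrans α y
      constructor
      · intro h
        refine ⟨p, q, hp, hq, hpx, hqy, mul_mem (inv_mem hp) hq, ?_⟩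
        have := (hsinv p⁻¹ x y).mp h
        rw [← hpx, ← hqy, inv_smul_smul, ← mul_smul] at this
        exact this
      · rintro ⟨p', q', hp', hq', hp'x, hq'y, hk⟩
        obtain ⟨-, hsk⟩ := hk
        have := (hsinv p' α ((p'⁻¹ * q') • α)).mp hsk
        rwa [← mul_smul, mul_inv_cancel_left, hp'x, hq'y] at this
    obtain ⟨n, hn, hnx⟩ := htrans α x
    obtain ⟨c, hc, hcz⟩ := htrans α z
    have h1 := aux_comp α N hfree K L hKN hLN x z n c hn hc hnx hcz
    have h2 := aux_comp α N hfree L K hLN hKN x z n c hn hc hnx hcz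
    have heq := hcom K L hKN hLN hKH hLH
    constructor
    · rintro ⟨y, hxy, hyz⟩
      have := h1.mp ⟨y, (hKt x y).mp hxy, (hLt y z).mp hyz⟩
      rw [heq] at this
      obtain ⟨y', hy1, hy2⟩ := h2.mpr this
      exact ⟨y', (hLt x y').mpr hy1, (hKt y' z).mpr hy2⟩
    · rintro ⟨y, hxy, hyz⟩
      have := h2.mp ⟨y, (hLt x y).mp hxy, (hKt y z).mp hyz⟩
      rw [← heq] at this
      obtain ⟨y', hy1, hy2⟩ := h1.mpr this
      exact ⟨y', (hKt x y').mpr hy1, (hLt y' z).mpr hy2⟩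
end

section
/- Let G be a transitive subgroup of the symmetric group on a set Ω, and let G⁽²⁾ be its 2-closure: the set of permutations σ of Ω such that for all x, y ∈ Ω there exists g ∈ G with σ x = g x and σ y = g y. Then G⁽²⁾ is a transitive subgroup of the symmetric group on Ω containing G, and G has the OB property if and only if G⁽²⁾ has the OB property. -/
/-!
The 2-closure of `G` consists of the permutations that agree with some element of `G` on every
pair of points, so a binary relation is invariant under it as soon as it is invariant under `G`.
Hence `G` and its 2-closure have the same invariant equivalence relations, and the OB property
only depends on those.
-/

section TwoClosure

variable {Ω : Type*}

def twoClosure (G : Subgroup (Equiv.Perm Ω)) : Subgroup (Equiv.Perm Ω) where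
  carrier := {σ | ∀ x y : Ω, ∃ g ∈ G, σ x = g x ∧ σ y = g y}
  one_mem' x y := ⟨1, G.one_mem, rfl, rfl⟩
  mul_mem' := by
    rintro σ τ hσ hτ x y
    obtain ⟨g, hg, hgx, hgy⟩ := hτ x y
    obtain ⟨h, hh, hhx, hhy⟩ := hσ (τ x) (τ y)
    refine ⟨h * g, G.mul_mem hh hg, ?_, ?_⟩
    · rw [Equiv.Perm.mul_apply, hhx, hgx, Equiv.Perm.mul_apply]
    · rw [Equiv.Perm.mul_apply, hhy, hgy, Equiv.Perm.mul_apply]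
  inv_mem' := by
    rintro σ hσ x y
    obtain ⟨g, hg, hgx, hgy⟩ := hσ (σ⁻¹ x) (σ⁻¹ y)
    simp only [Equiv.Perm.coe_inv, Equiv.apply_symm_apply] at hgx hgy
    refine ⟨g⁻¹, G.inv_mem hg, ?_, ?_⟩
    · exact Equiv.Perm.eq_inv_iff_eq.mpr hgx.symm
    · exact Equiv.Perm.eq_inv_iff_eq.mpr hgy.symm

theorem coe_twoClosure (G : Subgroup (Equiv.Perm Ω)) :
    (twoClosure G : Set (Equiv.Perm Ω)) =
      {σ | ∀ x y : Ω, ∃ g ∈ G, σ x = g x ∧ σ y = g y} :=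
  rfl

theorem le_twoClosure (G : Subgroup (Equiv.Perm Ω)) : G ≤ twoClosure G :=
  fun g hg _ _ => ⟨g, hg, rfl, rfl⟩

theorem PermInvariant.mono {G H : Subgroup (Equiv.Perm Ω)} {r : Ω → Ω → Prop} (hGH : G ≤ H)
    (hr : PermInvariant H r) : PermInvariant G r :=
  fun g hg => hr g (hGH hg)

theorem PermInvariant.twoClosure {G : Subgroup (Equiv.Perm Ω)} {r : Ω → Ω → Prop}
    (hr : PermInvariant G r) : PermInvariant (twoClosure G) r := by
  intro σ hσ x y
  obtain ⟨g, hg, hgx, hgy⟩ := hσ x y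
  rw [hgx, hgy]
  exact hr g hg x y

theorem permInvariant_twoClosure_iff {G : Subgroup (Equiv.Perm Ω)} {r : Ω → Ω → Prop} :
    PermInvariant (twoClosure G) r ↔ PermInvariant G r :=
  ⟨PermInvariant.mono (le_twoClosure G), PermInvariant.twoClosure⟩

theorem permOB_congr {G H : Subgroup (Equiv.Perm Ω)}
    (h : ∀ r : Ω → Ω → Prop, PermInvariant G r ↔ PermInvariant H r) :
    PermOB G ↔ PermOB H := by
  unfold PermOB
  simp only [h]

theorem permOB_twoClosure_iff (G : Subgroup (Equiv.Perm Ω)) :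
    PermOB (twoClosure G) ↔ PermOB G :=
  permOB_congr fun _ => permInvariant_twoClosure_iff

end TwoClosure

/-- The 2-closure of a transitive permutation group `G` is a
transitive subgroup containing `G`, and `G` has the OB property iff its
2-closure does. -/
theorem two_closure_OB_iff {Ω : Type*} (G : Subgroup (Equiv.Perm Ω))
    (htrans : ∀ x y : Ω, ∃ σ ∈ G, σ x = y) :
    ∃ H : Subgroup (Equiv.Perm Ω),
      (H : Set (Equiv.Perm Ω)) =
        {σ : Equiv.Perm Ω | ∀ x y : Ω, ∃ g ∈ G, σ x = g x ∧ σ y = g y} ∧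
      G ≤ H ∧
      (∀ x y : Ω, ∃ σ ∈ H, σ x = y) ∧
      (PermOB G ↔ PermOB H) := by
  refine ⟨twoClosure G, coe_twoClosure G, le_twoClosure G, fun x y => ?_,
    (permOB_twoClosure_iff G).symm⟩
  obtain ⟨σ, hσ, hσxy⟩ := htrans x y
  exact ⟨σ, le_twoClosure G hσ, hσxy⟩
end
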